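/- Let R be a commutative ring in which 2 is a unit, and let w := diag(−1, 1, 1, −1) ∈ GL₄(R). Let g ∈ GSp₄(R), i.e. g ∈ GL₄(R) with gᵀ J g = μ·J for some unit μ of R. Then g·w = w·g if and only if there exists a pair (h₁, h₂) ∈ GL₂(R) × GL₂(R) with det h₁ = det h₂ such that g = ι(h₁, h₂); that is, the centralizer of w in GSp₄(R) is exactly the image ι(H(R)) of H(R) = GL₂(R) ×_{GL₁} GL₂(R). -/
import Mathlib


/-!
Statement 12: the centralizer of `w = diag(−1,1,1,−1)` in `GSp₄(R)` is exactly the image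
of `H(R) = GL₂(R) ×_{GL₁} GL₂(R)` under the embedding `ι`, provided `2` is a unit in `R`.
-/

open Matrix

noncomputable section

namespace GSp4ES12

variable (R : Type*) [CommRing R]

/-- The standard antisymmetric matrix `J` with `J₁₄ = J₂₃ = 1`, `J₃₂ = J₄₁ = −1`. -/
def Jmat : Matrix (Fin 4) (Fin 4) R :=
  !![0, 0, 0, 1; 0, 0, 1, 0; 0, -1, 0, 0; -1, 0, 0, 0]

/-- The embedding `ι : H → GL₄` on matrices: `h₁` occupies the corners
(entries (1,1), (1,4), (4,1), (4,4)) and `h₂` occupies rows and columns 2 and 3. -/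
def iotaMat (A B : Matrix (Fin 2) (Fin 2) R) : Matrix (Fin 4) (Fin 4) R :=
  !![A 0 0, 0,     0,     A 0 1;
     0,     B 0 0, B 0 1, 0;
     0,     B 1 0, B 1 1, 0;
     A 1 0, 0,     0,     A 1 1]

theorem statement12 (h2 : IsUnit (2 : R))
    (w : Matrix (Fin 4) (Fin 4) R) (hw : w = Matrix.diagonal ![-1, 1, 1, -1])
    (g : GL (Fin 4) R)
    (hg : ∃ μ : Rˣ, (g : Matrix (Fin 4) (Fin 4) R)ᵀ * Jmat R * g = (μ : R) • Jmat R) :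
    (g : Matrix (Fin 4) (Fin 4) R) * w = w * g ↔
      ∃ h₁ h₂ : GL (Fin 2) R,
        (h₁ : Matrix (Fin 2) (Fin 2) R).det = (h₂ : Matrix (Fin 2) (Fin 2) R).det ∧
        (g : Matrix (Fin 4) (Fin 4) R) =
          iotaMat R (h₁ : Matrix (Fin 2) (Fin 2) R) (h₂ : Matrix (Fin 2) (Fin 2) R) := by
  subst hw
  set G : Matrix (Fin 4) (Fin 4) R := (g : Matrix (Fin 4) (Fin 4) R) with hG
  have half : ∀ x : R, x + x = 0 → x = 0 := by
    intro x hx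
    refine h2.mul_left_cancel ?_
    rw [mul_zero]; ring_nf; linear_combination hx
  constructor
  · intro hcomm
    have key : ∀ i j, G i j * (![(-1 : R), 1, 1, -1] j) = (![(-1 : R), 1, 1, -1] i) * G i j := by
      intro i j
      have := congrFun (congrFun hcomm i) j
      simpa [Matrix.mul_diagonal, Matrix.diagonal_mul] using this
    have z01 : G 0 1 = 0 := by have := key 0 1; simp at this; exact half _ (by linear_combination this)
    have z02 : G 0 2 = 0 := by have := key 0 2; simp at this; exact half _ (by linear_combination this)
    have z31 : G 3 1 = 0 := by have := key 3 1; simp at this; exact half _ (by linear_combination this)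
    have z32 : G 3 2 = 0 := by have := key 3 2; simp at this; exact half _ (by linear_combination this)
    have z10 : G 1 0 = 0 := by have := key 1 0; simp at this; exact half _ (by linear_combination -this)
    have z13 : G 1 3 = 0 := by have := key 1 3; simp at this; exact half _ (by linear_combination -this)
    have z20 : G 2 0 = 0 := by have := key 2 0; simp at this; exact half _ (by linear_combination -this)
    have z23 : G 2 3 = 0 := by have := key 2 3; simp at this; exact half _ (by linear_combination -this)
    obtain ⟨μ, hμ⟩ := hg
    set A : Matrix (Fin 2) (Fin 2) R := !![G 0 0, G 0 3; G 3 0, G 3 3] with hA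
    set B : Matrix (Fin 2) (Fin 2) R := !![G 1 1, G 1 2; G 2 1, G 2 2] with hB
    have symp : ∀ i j, ((G)ᵀ * Jmat R * G) i j = (μ : R) * Jmat R i j := by
      intro i j
      have := congrFun (congrFun hμ i) j
      simpa [Matrix.smul_apply, smul_eq_mul] using this
    have hdetA : A.det = (μ : R) := by
      have := symp 0 3
      simp [Jmat, Matrix.mul_apply, Fin.sum_univ_four, Matrix.transpose_apply,
        z10, z13, z20, z23] at this
      rw [Matrix.det_fin_two]
      simp [hA]
      linear_combination this
    have hdetB : B.det = (μ : R) := by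
      have := symp 1 2
      simp [Jmat, Matrix.mul_apply, Fin.sum_univ_four, Matrix.transpose_apply,
        z01, z02, z31, z32] at this
      rw [Matrix.det_fin_two]
      simp [hB]
      linear_combination this
    have hAu : IsUnit A := by
      rw [Matrix.isUnit_iff_isUnit_det, hdetA]; exact μ.isUnit
    have hBu : IsUnit B := by
      rw [Matrix.isUnit_iff_isUnit_det, hdetB]; exact μ.isUnit
    refine ⟨hAu.unit, hBu.unit, ?_, ?_⟩
    · rw [hAu.unit_spec, hBu.unit_spec, hdetA, hdetB]
    · rw [hAu.unit_spec, hBu.unit_spec]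
      ext i j
      fin_cases i <;> fin_cases j <;>
        simp [iotaMat, hA, hB, z01, z02, z31, z32, z10, z13, z20, z23]
  · rintro ⟨h₁, h₂, -, hgi⟩
    rw [hgi]
    ext i j
    fin_cases i <;> fin_cases j <;>
      simp [iotaMat, Matrix.mul_apply, Fin.sum_univ_four, Matrix.diagonal]

end GSp4ES12
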